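/- Let p be a sub-critical pmf on ℕ with p_0 > 0, unbounded support, and mean μ_p < 1. Then the maximal out-degree M(τ) of the Galton-Watson tree τ with offspring distribution p has finite expectation: E[M(τ)] = Σ_{n≥0} (1 − H(n)) < ∞, where H is the cdf of M(τ). -/

import Mathlib

/-! A vertex `u` has out-degree larger than `n` iff its child `u ++ [n]` lies in the tree, and a
word `v` lies in the tree with probability `∏ᵢ ℙ(ξ > vᵢ)`. A union bound over `u` therefore gives
`ℙ(M(τ) > n) ≤ ℙ(ξ > n) · ∑_u ∏ᵢ ℙ(ξ > uᵢ) = ℙ(ξ > n) / (1 - μ_p)`, because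
`∑_a ℙ(ξ > a) = μ_p`; summing over `n` yields `E[M(τ)] ≤ μ_p / (1 - μ_p) < ∞`. -/

open MeasureTheory
open scoped ENNReal

/-- Encoding of the Galton-Watson tree: `ω : List ℕ → ℕ` assigns a potential
out-degree to every Ulam–Harris word; `u` belongs to the tree iff each of its
coordinates is below the out-degree of the corresponding ancestor. -/
def memTree (ω : List ℕ → ℕ) (u : List ℕ) : Prop :=
  ∀ n < u.length, u.getD n 0 < ω (u.take n)

noncomputable def maxDeg (ω : List ℕ → ℕ) : ENNReal :=
  ⨆ (u : List ℕ) (_ : memTree ω u), (ω u : ENNReal)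

theorem ENNReal.tsum_pi_prod {ι κ : Type*} [Fintype ι] (f : ι → κ → ℝ≥0∞) :
    ∑' g : ι → κ, ∏ i, f i (g i) = ∏ i, ∑' k, f i k := by
  revert f
  refine Fintype.induction_empty_option
    (P := fun ι _ => ∀ f : ι → κ → ℝ≥0∞, ∑' g : ι → κ, ∏ i, f i (g i) = ∏ i, ∑' k, f i k)
    ?_ ?_ ?_ ι
  · intro α β _ e ih f
    let := Fintype.ofEquiv β e.symm
    have hprod (φ : β → ℝ≥0∞) : ∏ b, φ b = ∏ a, φ (e a) :=
      (Fintype.prod_equiv e _ _ fun _ => rfl).symm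
    rw [← (e.arrowCongr (Equiv.refl κ)).tsum_eq, hprod]
    simpa [hprod] using ih (fun a => f (e a))
  · intro f
    simp
  · intro α _ ih f
    rw [← Equiv.piOptionEquivProd.symm.tsum_eq, ENNReal.tsum_prod']
    simp [Fintype.prod_option, ENNReal.tsum_mul_left, ENNReal.tsum_mul_right, ih]

theorem ENNReal.tsum_list_prod_map {β : Type*} (g : β → ℝ≥0∞) :
    ∑' u : List β, (u.map g).prod = (1 - ∑' b, g b)⁻¹ := by
  rw [← List.equivSigmaTuple.symm.tsum_eq, ENNReal.tsum_sigma', ← ENNReal.tsum_geometric]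
  congr 1; ext n
  simp [List.equivSigmaTuple, List.map_ofFn, List.prod_ofFn, ENNReal.tsum_pi_prod]

theorem ENat.toENNReal_eq_tsum (a : ℕ∞) :
    (a : ℝ≥0∞) = ∑' n : ℕ, if (n : ℝ≥0∞) < a then 1 else 0 := by
  induction a using ENat.recTopCoe with
  | top => simp
  | coe m =>
    rw [tsum_eq_sum (s := Finset.range m) (by simp),
      Finset.sum_congr rfl fun n hn => if_pos (by simpa using hn)]
    simp

theorem MeasureTheory.lintegral_eq_tsum_measure_natCast_lt {Ω : Type*} [MeasurableSpace Ω]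
    (μ : Measure Ω) {f : Ω → ℝ≥0∞} (hf : Measurable f)
    (hf_nat : ∀ ω, f ω ∈ Set.range ((↑) : ℕ∞ → ℝ≥0∞)) :
    ∫⁻ ω, f ω ∂μ = ∑' n : ℕ, μ {ω | (n : ℝ≥0∞) < f ω} := by
  have hmeas (n : ℕ) : MeasurableSet {ω | (n : ℝ≥0∞) < f ω} := measurableSet_lt measurable_const hf
  calc ∫⁻ ω, f ω ∂μ = ∫⁻ ω, ∑' n : ℕ, {ω | (n : ℝ≥0∞) < f ω}.indicator 1 ω ∂μ := by
        congr 1; ext ω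
        obtain ⟨a, ha⟩ := hf_nat ω
        rw [← ha, ENat.toENNReal_eq_tsum]
        simp [Set.indicator_apply, ha]
    _ = ∑' n : ℕ, μ {ω | (n : ℝ≥0∞) < f ω} := by
      rw [lintegral_tsum fun n => (measurable_one.indicator (hmeas n)).aemeasurable]
      simp [lintegral_indicator_one (hmeas _)]

def HasIIDCoordinates {α : Type*} (μ : Measure (α → ℕ)) (P : ℕ → ℝ≥0∞) : Prop :=
  ∀ (s : Finset α) (f : α → ℕ), μ {ω | ∀ u ∈ s, ω u = f u} = ∏ u ∈ s, P (f u)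

namespace HasIIDCoordinates

variable {α ι : Type*} [Fintype ι] {μ : Measure (α → ℕ)} {P : ℕ → ℝ≥0∞}

theorem measure_forall_apply_eq (hμ : HasIIDCoordinates μ P) {c : ι → α} (hc : c.Injective)
    (g : ι → ℕ) : μ {ω | ∀ i, ω (c i) = g i} = ∏ i, P (g i) := by
  classical
  have hset : {ω : α → ℕ | ∀ i, ω (c i) = g i} =
      {ω | ∀ u ∈ Finset.univ.image c, ω u = Function.extend c g 0 u} := by
    simp [hc.extend_apply]
  rw [hset, hμ, Finset.prod_image hc.injOn]
  simp [hc.extend_apply]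

theorem measure_forall_apply_mem (hμ : HasIIDCoordinates μ P) {c : ι → α} (hc : c.Injective)
    (A : ι → Set ℕ) : μ {ω | ∀ i, ω (c i) ∈ A i} = ∏ i, ∑' m, (A i).indicator P m := by
  classical
  let r : (α → ℕ) → ι → ℕ := fun ω i => ω (c i)
  have hfiber (g : ι → ℕ) : r ⁻¹' {g} = {ω | ∀ i, ω (c i) = g i} := by
    ext ω; simp [r, funext_iff]
  calc μ {ω | ∀ i, ω (c i) ∈ A i} = μ (r ⁻¹' Set.univ.pi A) := by congr 1; ext; simp [r]
    _ = ∑' g : Set.univ.pi A, μ (r ⁻¹' {g.1}) :=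
      (tsum_measure_preimage_singleton (Set.to_countable _)
        fun g _ => (measurable_pi_lambda r fun i => measurable_pi_apply (c i))
          (measurableSet_singleton g)).symm
    _ = ∑' g : ι → ℕ, ∏ i, (A i).indicator P (g i) := by
      rw [tsum_subtype (Set.univ.pi A) fun g => μ (r ⁻¹' {g})]
      congr 1; ext g
      simp only [Set.indicator_apply, Set.mem_univ_pi, Finset.prod_ite_zero, Finset.mem_univ,
        true_implies, hfiber, hμ.measure_forall_apply_eq hc]
    _ = ∏ i, ∑' m, (A i).indicator P m := ENNReal.tsum_pi_prod _

end HasIIDCoordinates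

noncomputable def tailMass (P : ℕ → ℝ≥0∞) (a : ℕ) : ℝ≥0∞ :=
  ∑' m, (Set.Ioi a).indicator P m

theorem tsum_tailMass (P : ℕ → ℝ≥0∞) : ∑' a, tailMass P a = ∑' k : ℕ, k * P k := by
  simp only [tailMass]
  rw [ENNReal.tsum_comm]
  congr 1; ext k
  rw [tsum_eq_sum (s := Finset.range k) fun b hb => Set.indicator_of_notMem (by simpa using hb) _,
    Finset.sum_congr rfl fun b hb => Set.indicator_of_mem (by simpa using hb) _]
  simp

theorem memTree_iff_forall_fin (ω : List ℕ → ℕ) (u : List ℕ) :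
    memTree ω u ↔ ∀ i : Fin u.length, u[(i : ℕ)] < ω (u.take i) := by
  simp only [memTree, Fin.forall_iff]
  exact forall₂_congr fun i hi => by rw [List.getD_eq_getElem _ _ hi]

theorem memTree_append_singleton (ω : List ℕ → ℕ) (u : List ℕ) (n : ℕ) :
    memTree ω (u ++ [n]) ↔ memTree ω u ∧ n < ω u := by
  rw [memTree, memTree, List.length_append, List.length_singleton, Nat.forall_lt_succ_right]
  refine and_congr (forall₂_congr fun i hi => ?_) ?_
  · rw [List.getD_append _ _ _ _ hi, List.take_append_of_le_length hi.le]
  · simp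

theorem measurableSet_memTree (u : List ℕ) : MeasurableSet {ω : List ℕ → ℕ | memTree ω u} := by
  simp only [memTree, Set.ofPred_forall]
  exact .iInter fun n => .iInter fun _ => measurableSet_lt measurable_const (measurable_pi_apply _)

theorem measurable_maxDeg : Measurable maxDeg := by
  classical
  unfold maxDeg
  simp only [iSup_eq_if]
  exact .iSup fun u =>
    .ite (measurableSet_memTree u) (measurable_from_top.comp (measurable_pi_apply u)) measurable_const

theorem maxDeg_mem_range (ω : List ℕ → ℕ) : maxDeg ω ∈ Set.range ((↑) : ℕ∞ → ℝ≥0∞) :=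
  ⟨⨆ (u : List ℕ) (_ : memTree ω u), (ω u : ℕ∞), by simp [maxDeg]⟩

section GaltonWatson

variable {μ : Measure (List ℕ → ℕ)} {P : ℕ → ℝ≥0∞}

theorem measure_memTree (hμ : HasIIDCoordinates μ P) (v : List ℕ) :
    μ {ω | memTree ω v} = (v.map (tailMass P)).prod := by
  have hinj : (fun i : Fin v.length => v.take i).Injective := fun i j hij => by
    simpa [Fin.val_inj] using congrArg List.length hij
  simp_rw [memTree_iff_forall_fin, ← Set.mem_Ioi]
  rw [hμ.measure_forall_apply_mem hinj, ← Fin.prod_univ_fun_getElem]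
  rfl

theorem measure_natCast_lt_maxDeg_le (hμ : HasIIDCoordinates μ P) (n : ℕ) :
    μ {ω | (n : ℝ≥0∞) < maxDeg ω} ≤ (1 - ∑' k : ℕ, k * P k)⁻¹ * tailMass P n := by
  have hsub : {ω | (n : ℝ≥0∞) < maxDeg ω} ⊆ ⋃ u : List ℕ, {ω | memTree ω (u ++ [n])} := by
    intro ω hω
    simp only [Set.mem_ofPred_eq, maxDeg, lt_iSup_iff] at hω
    obtain ⟨u, hmem, hlt⟩ := hω
    exact Set.mem_iUnion.2 ⟨u, (memTree_append_singleton ω u n).2 ⟨hmem, Nat.cast_lt.1 hlt⟩⟩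
  calc μ {ω | (n : ℝ≥0∞) < maxDeg ω}
      ≤ ∑' u : List ℕ, μ {ω | memTree ω (u ++ [n])} :=
        (measure_mono hsub).trans (measure_iUnion_le _)
    _ = ∑' u : List ℕ, (u.map (tailMass P)).prod * tailMass P n := by
      simp [measure_memTree hμ]
    _ = (1 - ∑' k : ℕ, k * P k)⁻¹ * tailMass P n := by
      rw [ENNReal.tsum_mul_right, ENNReal.tsum_list_prod_map, tsum_tailMass]

theorem lintegral_maxDeg_le (hμ : HasIIDCoordinates μ P) :
    ∫⁻ ω, maxDeg ω ∂μ ≤ (1 - ∑' k : ℕ, k * P k)⁻¹ * ∑' k : ℕ, k * P k := by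
  calc ∫⁻ ω, maxDeg ω ∂μ = ∑' n : ℕ, μ {ω | (n : ℝ≥0∞) < maxDeg ω} :=
        lintegral_eq_tsum_measure_natCast_lt μ measurable_maxDeg maxDeg_mem_range
    _ ≤ ∑' n : ℕ, (1 - ∑' k : ℕ, k * P k)⁻¹ * tailMass P n :=
        ENNReal.tsum_le_tsum (measure_natCast_lt_maxDeg_le hμ)
    _ = (1 - ∑' k : ℕ, k * P k)⁻¹ * ∑' k : ℕ, k * P k := by
      rw [ENNReal.tsum_mul_left, tsum_tailMass]

end GaltonWatson

theorem maxDeg_finite_expectation_general (p : ℕ → ℝ) (hp : ∀ k, 0 ≤ p k)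
    (hmeanS : Summable fun k : ℕ => (k : ℝ) * p k)
    (hmean : ∑' k : ℕ, (k : ℝ) * p k < 1)
    (μ : Measure (List ℕ → ℕ))
    (hcyl : ∀ (s : Finset (List ℕ)) (f : List ℕ → ℕ),
      μ {ω | ∀ u ∈ s, ω u = f u} = ∏ u ∈ s, ENNReal.ofReal (p (f u))) :
    (∫⁻ ω, maxDeg ω ∂μ) = (∑' n : ℕ, μ {ω | (n : ENNReal) < maxDeg ω}) ∧
      (∫⁻ ω, maxDeg ω ∂μ) < ⊤ := by
  have hm : ∑' k : ℕ, (k : ℝ≥0∞) * ENNReal.ofReal (p k) < 1 := by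
    have hterm (k : ℕ) : ENNReal.ofReal (k * p k) = k * ENNReal.ofReal (p k) := by
      rw [ENNReal.ofReal_mul k.cast_nonneg, ENNReal.ofReal_natCast]
    simp_rw [← hterm,
      ← ENNReal.ofReal_tsum_of_nonneg (fun k => mul_nonneg k.cast_nonneg (hp k)) hmeanS]
    exact ENNReal.ofReal_lt_one.2 hmean
  refine ⟨lintegral_eq_tsum_measure_natCast_lt μ measurable_maxDeg maxDeg_mem_range, ?_⟩
  calc ∫⁻ ω, maxDeg ω ∂μ ≤ _ := lintegral_maxDeg_le (P := fun k => ENNReal.ofReal (p k)) hcyl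
    _ < ⊤ := ENNReal.mul_lt_top (ENNReal.inv_lt_top.2 (tsub_pos_of_lt hm))
      (hm.trans ENNReal.one_lt_top)

/-- For a sub-critical unbounded offspring distribution `p` with `p 0 > 0`,
the maximal out-degree `M(τ)` of the Galton-Watson tree has finite
expectation, and `E[M(τ)] = Σ_{n≥0} (1 − H(n))` where
`1 − H(n) = ℙ(M(τ) > n)`. -/
theorem maxDeg_finite_expectation (p : ℕ → ℝ) (hp : ∀ k, 0 ≤ p k)
    (hsum : ∑' k, p k = 1) (hp0 : 0 < p 0)
    (hmeanS : Summable fun k : ℕ => (k : ℝ) * p k)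
    (hmean : ∑' k : ℕ, (k : ℝ) * p k < 1)
    (hunb : {n : ℕ | 0 < p n}.Infinite)
    (μ : Measure (List ℕ → ℕ)) [IsProbabilityMeasure μ]
    (hcyl : ∀ (s : Finset (List ℕ)) (f : List ℕ → ℕ),
      μ {ω | ∀ u ∈ s, ω u = f u} = ∏ u ∈ s, ENNReal.ofReal (p (f u))) :
    (∫⁻ ω, maxDeg ω ∂μ) = (∑' n : ℕ, μ {ω | (n : ENNReal) < maxDeg ω}) ∧
      (∫⁻ ω, maxDeg ω ∂μ) < ⊤ :=
  maxDeg_finite_expectation_general p hp hmeanS hmean μ hcyl
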